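/- Suppose ρᵏ_j > 0 for all j and (ρ^{k+1}, m*) is a minimizer of F over all pairs (ρ, m) with ρ_j > 0 satisfying the discrete continuity constraint with data ρᵏ. Then the modified energy decays: (β⁻² τ / 2) I_h(ρ^{k+1}) + E(ρ^{k+1}) ≤ (β⁻² τ / 2) I_h(ρᵏ) + E(ρᵏ), where I_h(ρ) = Σ_{j=1}^{N−1} (log ρ_{j+1} − log ρ_j)² (ρ_j + ρ_{j+1}) / (2Δx) is the discrete Fisher information. -/
import Mathlib


/-- The discrete continuity constraint with data `ρᵏ` and zero-flux boundary values:
`m_0 = m_N = 0` and `ρ_j − ρᵏ_j + (m_j − m_{j−1})/Δx = 0` for `1 ≤ j ≤ N`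
(densities are indexed by `Fin N`, fluxes by `Fin (N+1)`). -/
def JKOFeasible (N : ℕ) (Δx : ℝ) (ρk : Fin N → ℝ)
    (p : (Fin N → ℝ) × (Fin (N + 1) → ℝ)) : Prop :=
  (∀ j, 0 < p.1 j) ∧ p.2 0 = 0 ∧ p.2 (Fin.last N) = 0 ∧
    ∀ j : Fin N, p.1 j - ρk j + (p.2 j.succ - p.2 j.castSucc) / Δx = 0

/-- The discrete regularized JKO objective
`F(ρ, m) = Σ_{j=1}^{N−1} [2 m_j²/(ρ_j + ρ_{j+1})
  + (β⁻²τ²/Δx²)(log ρ_{j+1} − log ρ_j)²(ρ_j + ρ_{j+1})/2] Δx + 2τ E(ρ)`. -/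
noncomputable def JKOObjective (N : ℕ) (Δx τ β : ℝ) (E : (Fin N → ℝ) → ℝ)
    (p : (Fin N → ℝ) × (Fin (N + 1) → ℝ)) : ℝ :=
  (∑ i : Fin N, if h : (i : ℕ) + 1 < N then
      2 * (p.2 ⟨(i : ℕ) + 1, by omega⟩) ^ 2 / (p.1 i + p.1 ⟨(i : ℕ) + 1, h⟩) +
        β⁻¹ ^ 2 * τ ^ 2 / Δx ^ 2 *
          (Real.log (p.1 ⟨(i : ℕ) + 1, h⟩) - Real.log (p.1 i)) ^ 2 *
          (p.1 i + p.1 ⟨(i : ℕ) + 1, h⟩) / 2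
    else 0) * Δx + 2 * τ * E p.1

/-- The discrete Fisher information
`I_h(ρ) = Σ_{j=1}^{N−1} (log ρ_{j+1} − log ρ_j)²(ρ_j + ρ_{j+1})/(2Δx)`. -/
noncomputable def discreteFisher1D (N : ℕ) (Δx : ℝ) (ρ : Fin N → ℝ) : ℝ :=
  ∑ i : Fin N, if h : (i : ℕ) + 1 < N then
      (Real.log (ρ ⟨(i : ℕ) + 1, h⟩) - Real.log (ρ i)) ^ 2 *
        (ρ i + ρ ⟨(i : ℕ) + 1, h⟩) / (2 * Δx)
    else 0

/-- If `(ρ^{k+1}, m*)` minimizes the discrete regularized JKO objective over the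
feasible set with positive data `ρᵏ`, then the modified energy decays:
`(β⁻²τ/2) I_h(ρ^{k+1}) + E(ρ^{k+1}) ≤ (β⁻²τ/2) I_h(ρᵏ) + E(ρᵏ)`. -/
theorem JKO_modified_energy_decay (N : ℕ) (hN : 1 ≤ N) (Δx τ β : ℝ)
    (hΔx : 0 < Δx) (hτ : 0 < τ) (hβ : 0 < β)
    (E : (Fin N → ℝ) → ℝ) (ρk : Fin N → ℝ) (hρk : ∀ j, 0 < ρk j)
    (p : (Fin N → ℝ) × (Fin (N + 1) → ℝ))
    (hfeas : JKOFeasible N Δx ρk p)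
    (hmin : ∀ q, JKOFeasible N Δx ρk q →
      JKOObjective N Δx τ β E p ≤ JKOObjective N Δx τ β E q) :
    β⁻¹ ^ 2 * τ / 2 * discreteFisher1D N Δx p.1 + E p.1 ≤
      β⁻¹ ^ 2 * τ / 2 * discreteFisher1D N Δx ρk + E ρk := by
  obtain ⟨hpos, -, -, -⟩ := hfeas
  have hτ2 : (0:ℝ) < 2 * τ := by linarith
  have hfeas0 : JKOFeasible N Δx ρk (ρk, fun _ => 0) :=
    ⟨hρk, rfl, rfl, fun j => by simp⟩
  have hle := hmin _ hfeas0
  -- lower bound for F(p)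
  have h1 : 2 * τ * (β⁻¹ ^ 2 * τ / 2 * discreteFisher1D N Δx p.1 + E p.1) ≤
      JKOObjective N Δx τ β E p := by
    unfold JKOObjective discreteFisher1D
    have key : β⁻¹ ^ 2 * τ ^ 2 *
        (∑ i : Fin N, if h : (i : ℕ) + 1 < N then
          (Real.log (p.1 ⟨(i : ℕ) + 1, h⟩) - Real.log (p.1 i)) ^ 2 *
            (p.1 i + p.1 ⟨(i : ℕ) + 1, h⟩) / (2 * Δx)
        else 0) ≤
        (∑ i : Fin N, if h : (i : ℕ) + 1 < N then
          2 * (p.2 ⟨(i : ℕ) + 1, by omega⟩) ^ 2 / (p.1 i + p.1 ⟨(i : ℕ) + 1, h⟩) +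
            β⁻¹ ^ 2 * τ ^ 2 / Δx ^ 2 *
              (Real.log (p.1 ⟨(i : ℕ) + 1, h⟩) - Real.log (p.1 i)) ^ 2 *
              (p.1 i + p.1 ⟨(i : ℕ) + 1, h⟩) / 2
        else 0) * Δx := by
      rw [Finset.mul_sum, Finset.sum_mul]
      apply Finset.sum_le_sum
      intro i _
      by_cases h : (i : ℕ) + 1 < N
      · simp only [dif_pos h]
        set s := p.1 i + p.1 ⟨(i : ℕ) + 1, h⟩ with hs_def
        have hs : 0 < s := add_pos (hpos i) (hpos _)
        set L := Real.log (p.1 ⟨(i : ℕ) + 1, h⟩) - Real.log (p.1 i) with hL_def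
        set m := p.2 ⟨(i : ℕ) + 1, by omega⟩ with hm_def
        have hm : 0 ≤ 2 * m ^ 2 / s * Δx := by positivity
        have heq : β⁻¹ ^ 2 * τ ^ 2 / Δx ^ 2 * L ^ 2 * s / 2 * Δx =
            β⁻¹ ^ 2 * τ ^ 2 * (L ^ 2 * s / (2 * Δx)) := by
          field_simp
        rw [add_mul]
        linarith
      · simp [h]
    have expand : 2 * τ * (β⁻¹ ^ 2 * τ / 2 *
        (∑ i : Fin N, if h : (i : ℕ) + 1 < N then
          (Real.log (p.1 ⟨(i : ℕ) + 1, h⟩) - Real.log (p.1 i)) ^ 2 *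
            (p.1 i + p.1 ⟨(i : ℕ) + 1, h⟩) / (2 * Δx)
        else 0) + E p.1) =
        β⁻¹ ^ 2 * τ ^ 2 *
        (∑ i : Fin N, if h : (i : ℕ) + 1 < N then
          (Real.log (p.1 ⟨(i : ℕ) + 1, h⟩) - Real.log (p.1 i)) ^ 2 *
            (p.1 i + p.1 ⟨(i : ℕ) + 1, h⟩) / (2 * Δx)
        else 0) + 2 * τ * E p.1 := by ring
    linarith
  -- exact value of F(ρk, 0)
  have h2 : JKOObjective N Δx τ β E (ρk, fun _ => 0) =
      2 * τ * (β⁻¹ ^ 2 * τ / 2 * discreteFisher1D N Δx ρk + E ρk) := by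
    unfold JKOObjective discreteFisher1D
    have key : (∑ i : Fin N, if h : (i : ℕ) + 1 < N then
          2 * ((0:ℝ)) ^ 2 / (ρk i + ρk ⟨(i : ℕ) + 1, h⟩) +
            β⁻¹ ^ 2 * τ ^ 2 / Δx ^ 2 *
              (Real.log (ρk ⟨(i : ℕ) + 1, h⟩) - Real.log (ρk i)) ^ 2 *
              (ρk i + ρk ⟨(i : ℕ) + 1, h⟩) / 2
        else 0) * Δx =
        β⁻¹ ^ 2 * τ ^ 2 *
        (∑ i : Fin N, if h : (i : ℕ) + 1 < N then
          (Real.log (ρk ⟨(i : ℕ) + 1, h⟩) - Real.log (ρk i)) ^ 2 *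
            (ρk i + ρk ⟨(i : ℕ) + 1, h⟩) / (2 * Δx)
        else 0) := by
      rw [Finset.mul_sum, Finset.sum_mul]
      apply Finset.sum_congr rfl
      intro i _
      by_cases h : (i : ℕ) + 1 < N
      · simp only [dif_pos h]
        have : (2 * (0:ℝ) ^ 2 / (ρk i + ρk ⟨(i : ℕ) + 1, h⟩)) = 0 := by
          simp
        rw [this, zero_add]
        field_simp
      · simp [h]
    simp only [key]
    ring
  rw [h2] at hle
  have := le_trans h1 hle
  exact le_of_mul_le_mul_left this hτ2
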